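/- Every optimal point (τ*, ε_D*, ε_U*) of problem (P1) with finite storage capacities satisfies ε_{D,0}* = τ_0*·P_P. -/

import Mathlib

/-- The rate function `r(t,x) = t·log(1 + x/t)` for `t > 0`, and `r(0,x) = 0`. -/
noncomputable def rate (t x : ℝ) : ℝ := if 0 < t then t * Real.log (1 + x / t) else 0

/-- Feasible set of problem (P1) with finite storage: `τ_i ≥ 0`,
`0 ≤ ε_{D,i} ≤ τ_i·P_P` for `0 ≤ i ≤ K`, `0 ≤ ε_{U,i} ≤ B_i` for `1 ≤ i ≤ K`,
`Σ ε_{D,i} ≤ P_A`, `Σ τ_i ≤ 1`, and `ε_{U,i} ≤ η_i·g_{D,i}·Σ_{j=0}^{i−1} ε_{D,j}`. -/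
def FeasibleP1 (K : ℕ) (PA PP : ℝ) (η gD B : ℕ → ℝ) (τ εD εU : ℕ → ℝ) : Prop :=
  (∀ i ≤ K, 0 ≤ τ i) ∧ (∀ i ≤ K, 0 ≤ εD i ∧ εD i ≤ τ i * PP) ∧
  (∀ i, 1 ≤ i → i ≤ K → 0 ≤ εU i ∧ εU i ≤ B i) ∧
  (∑ i ∈ Finset.range (K + 1), εD i ≤ PA) ∧ (∑ i ∈ Finset.range (K + 1), τ i ≤ 1) ∧
  (∀ i, 1 ≤ i → i ≤ K → εU i ≤ η i * gD i * ∑ j ∈ Finset.range i, εD j)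

/-- Objective of (P1): `Σ_{i=1}^K r(τ_i, (g_{U,i}/σ_i²)·ε_{U,i})`. -/
noncomputable def ObjP1 (K : ℕ) (gU σ2 : ℕ → ℝ) (τ εU : ℕ → ℝ) : ℝ :=
  ∑ i ∈ Finset.Icc 1 K, rate (τ i) (gU i / σ2 i * εU i)

/-!
If `ε_{D,0} < τ₀·P_P`, slot 0 idles for `τ₀ - ε_{D,0}/P_P`; that time can be handed to an uplink
slot `i` with `τᵢ > 0` and positive received SNR without violating any constraint. Since
`t ↦ t·log(1 + x/t)` is strictly increasing for `x > 0` (it is the perspective of a concave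
function vanishing at the origin), this strictly raises the objective. Such a slot exists at an
optimum because (P1) has feasible points of positive value.
-/

open Finset

lemma rate_zero_right (t : ℝ) : rate t 0 = 0 := by
  simp [rate]

lemma rate_pos {t x : ℝ} (ht : 0 < t) (hx : 0 < x) : 0 < rate t x := by
  rw [rate, if_pos ht]
  have : 0 < x / t := div_pos hx ht
  exact mul_pos ht (Real.log_pos (by linarith))

lemma pos_and_pos_of_rate_pos {t x : ℝ} (hx : 0 ≤ x) (h : 0 < rate t x) : 0 < t ∧ 0 < x := by
  have ht : 0 < t := by
    by_contra ht
    simp [rate, ht] at h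
  refine ⟨ht, hx.lt_of_ne ?_⟩
  rintro rfl
  simp [rate_zero_right] at h

lemma rate_lt_rate {t t' x : ℝ} (ht : 0 < t) (htt' : t < t') (hx : 0 < x) :
    rate t x < rate t' x := by
  have ht' : 0 < t' := ht.trans htt'
  rw [rate, rate, if_pos ht, if_pos ht']
  have hxt : 0 < x / t := div_pos hx ht
  have hθ : t / t' < 1 := (div_lt_one ht').2 htt'
  have hconc := strictConcaveOn_log_Ioi.2
    (show 1 + x / t ∈ Set.Ioi 0 by simp only [Set.mem_Ioi]; linarith) (show (1 : ℝ) ∈ Set.Ioi 0 by norm_num) (show 1 + x / t ≠ 1 by intro h; linarith)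
    (div_pos ht ht') (show 0 < 1 - t / t' by linarith) (by ring)
  have hmix : t / t' * (1 + x / t) + (1 - t / t') * 1 = 1 + x / t' := by
    field_simp
    ring
  simp only [smul_eq_mul, hmix, Real.log_one, mul_zero, add_zero] at hconc
  calc t * Real.log (1 + x / t) = t' * (t / t' * Real.log (1 + x / t)) := by field_simp
    _ < t' * Real.log (1 + x / t') := mul_lt_mul_of_pos_left hconc ht'

lemma exists_pos_of_objP1_pos {K : ℕ} {gU σ2 τ εU : ℕ → ℝ}
    (hx : ∀ i ∈ Icc 1 K, 0 ≤ gU i / σ2 i * εU i) (h : 0 < ObjP1 K gU σ2 τ εU) :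
    ∃ i ∈ Icc 1 K, 0 < τ i ∧ 0 < gU i / σ2 i * εU i := by
  rw [ObjP1, ← sum_const_zero (s := Icc 1 K)] at h
  obtain ⟨i, hi, hrate⟩ := exists_lt_of_sum_lt h
  exact ⟨i, hi, pos_and_pos_of_rate_pos (hx i hi) hrate⟩

section Feasible

variable {K : ℕ} {PA PP : ℝ} {η gD B : ℕ → ℝ}

/-- Slot 0 harvests `P_A` at full power `P_P`, and slot 1 uses the remaining time to upload. -/
lemma exists_feasibleP1_objP1_pos (gU σ2 : ℕ → ℝ) (hK : 1 ≤ K)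
    (hη : ∀ i, 1 ≤ i → i ≤ K → 0 < η i) (hgD : ∀ i, 1 ≤ i → i ≤ K → 0 < gD i)
    (hgU : 0 < gU 1) (hσ2 : 0 < σ2 1) (hB : ∀ i, 1 ≤ i → i ≤ K → 0 < B i)
    (hPA : 0 < PA) (hPP : PA < PP) :
    ∃ τ εD εU, FeasibleP1 K PA PP η gD B τ εD εU ∧ 0 < ObjP1 K gU σ2 τ εU := by
  classical
  have hPP0 : 0 < PP := hPA.trans hPP
  set a := PA / PP
  have ha0 : 0 ≤ a := (div_pos hPA hPP0).le
  have ha1 : a < 1 := (div_lt_one hPP0).2 hPP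
  set m := min (B 1) (η 1 * gD 1 * PA)
  have hm : 0 < m :=
    lt_min (hB 1 le_rfl hK) (mul_pos (mul_pos (hη 1 le_rfl hK) (hgD 1 le_rfl hK)) hPA)
  have hτ : ∀ i, 0 ≤ (Pi.single 0 a + Pi.single 1 (1 - a) : ℕ → ℝ) i := by
    intro i
    rcases i with _ | _ | i <;> simp [ha0, ha1.le]
  refine ⟨Pi.single 0 a + Pi.single 1 (1 - a), Pi.single 0 PA, Pi.single 1 m,
    ⟨fun i _ => hτ i, fun i _ => ?_, fun i hi1 hiK => ?_, ?_, ?_, fun i hi1 hiK => ?_⟩, ?_⟩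
  · rcases i with _ | i
    · simp [hPA.le, a, hPP0.ne']
    · simpa using mul_nonneg (hτ (i + 1)) hPP0.le
  · rcases eq_or_ne i 1 with rfl | hi
    · simp [hm.le, m]
    · simp [hi, (hB i hi1 hiK).le]
  · simp [sum_pi_single']
  · simp [sum_add_distrib, sum_pi_single', show 0 < K by omega]
  · have hsum : ∑ j ∈ range i, (Pi.single 0 PA : ℕ → ℝ) j = PA := by
      simp [sum_pi_single', show 0 < i by omega]
    rw [hsum]
    rcases eq_or_ne i 1 with rfl | hi
    · simp [m]
    · simpa [hi] using (mul_pos (mul_pos (hη i hi1 hiK) (hgD i hi1 hiK)) hPA).le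
  · rw [ObjP1, sum_eq_single 1 (fun i _ hi => by simp [hi, rate_zero_right]) (by simp [hK])]
    exact rate_pos (by simpa using ha1) (by simpa using mul_pos (div_pos hgU hσ2) hm)

/-- Moving the idle time `τ₀ - ε_{D,0}/P_P` of slot 0 to an active uplink slot. -/
lemma FeasibleP1.exists_objP1_lt {τ εD εU : ℕ → ℝ} (gU σ2 : ℕ → ℝ)
    (h : FeasibleP1 K PA PP η gD B τ εD εU) (hPP : 0 < PP) (hslack : εD 0 < τ 0 * PP)
    {i : ℕ} (hi : i ∈ Icc 1 K) (hτi : 0 < τ i) (hxi : 0 < gU i / σ2 i * εU i) :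
    ∃ τ', FeasibleP1 K PA PP η gD B τ' εD εU ∧ ObjP1 K gU σ2 τ εU < ObjP1 K gU σ2 τ' εU := by
  classical
  obtain ⟨hτ, hεD, hεU, hsumD, hsumτ, hup⟩ := h
  obtain ⟨hi1, hiK⟩ := mem_Icc.1 hi
  have hi0 : i ≠ 0 := by omega
  set d := τ 0 - εD 0 / PP
  have hd : 0 < d := by
    have := (div_lt_iff₀ hPP).2 hslack
    simp only [d]
    linarith
  set τ' := τ + Pi.single i d - Pi.single 0 d
  have hτ'0 : τ' 0 = εD 0 / PP := by
    simp [τ', hi0.symm, d]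
  have hτ'i : τ' i = τ i + d := by
    simp [τ', hi0]
  have hτ'j : ∀ j, j ≠ 0 → j ≠ i → τ' j = τ j := by
    intro j hj0 hji
    simp [τ', hj0, hji]
  have hτle : ∀ j, j ≠ 0 → τ j ≤ τ' j := by
    intro j hj0
    rcases eq_or_ne j i with rfl | hji
    · linarith
    · rw [hτ'j j hj0 hji]
  refine ⟨τ', ⟨fun j hj => ?_, fun j hj => ⟨(hεD j hj).1, ?_⟩, hεU, hsumD, ?_, hup⟩, ?_⟩
  · rcases eq_or_ne j 0 with rfl | hj0
    · rw [hτ'0]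
      exact div_nonneg (hεD 0 hj).1 hPP.le
    · exact (hτ j hj).trans (hτle j hj0)
  · rcases eq_or_ne j 0 with rfl | hj0
    · rw [hτ'0, div_mul_cancel₀ _ hPP.ne']
    · exact (hεD j hj).2.trans (mul_le_mul_of_nonneg_right (hτle j hj0) hPP.le)
  · have hiK' : i < K + 1 := by omega
    simpa [τ', sum_add_distrib, sum_sub_distrib, sum_pi_single', hiK'] using hsumτ
  · refine sum_lt_sum (fun j hj => ?_) ⟨i, hi, ?_⟩
    · rcases eq_or_ne j i with rfl | hji
      · rw [hτ'i]
        exact (rate_lt_rate hτi (by linarith) hxi).le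
      · rw [hτ'j j (by have := (mem_Icc.1 hj).1; omega) hji]
    · rw [hτ'i]
      exact rate_lt_rate hτi (by linarith) hxi

end Feasible

/-- Every optimal point `(τ*, ε_D*, ε_U*)` of problem (P1) with finite storage
capacities satisfies `ε_{D,0}* = τ_0*·P_P`. -/
theorem stmt18 (K : ℕ) (hK : 1 ≤ K) (η gD gU σ2 B : ℕ → ℝ)
    (hη : ∀ i, 1 ≤ i → i ≤ K → 0 < η i) (hgD : ∀ i, 1 ≤ i → i ≤ K → 0 < gD i)
    (hgU : ∀ i, 1 ≤ i → i ≤ K → 0 < gU i) (hσ2 : ∀ i, 1 ≤ i → i ≤ K → 0 < σ2 i)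
    (hB : ∀ i, 1 ≤ i → i ≤ K → 0 < B i)
    (PA PP : ℝ) (hPA : 0 < PA) (hPP : PA < PP)
    (τ εD εU : ℕ → ℝ) (hfeas : FeasibleP1 K PA PP η gD B τ εD εU)
    (hopt : ∀ τ' εD' εU' : ℕ → ℝ, FeasibleP1 K PA PP η gD B τ' εD' εU' →
      ObjP1 K gU σ2 τ' εU' ≤ ObjP1 K gU σ2 τ εU) :
    εD 0 = τ 0 * PP := by
  have hx : ∀ i ∈ Icc 1 K, 0 ≤ gU i / σ2 i * εU i := by
    intro i hi
    obtain ⟨hi1, hiK⟩ := mem_Icc.1 hi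
    have := (hfeas.2.2.1 i hi1 hiK).1
    have := hgU i hi1 hiK
    have := hσ2 i hi1 hiK
    positivity
  obtain ⟨τ', εD', εU', hfeas', hpos'⟩ := exists_feasibleP1_objP1_pos gU σ2 hK hη hgD
    (hgU 1 le_rfl hK) (hσ2 1 le_rfl hK) hB hPA hPP
  obtain ⟨i, hi, hτi, hxi⟩ := exists_pos_of_objP1_pos hx (hpos'.trans_le (hopt τ' εD' εU' hfeas'))
  refine (hfeas.2.1 0 K.zero_le).2.eq_of_not_lt fun hslack => ?_
  obtain ⟨τ'', hfeas'', hlt⟩ := hfeas.exists_objP1_lt gU σ2 (hPA.trans hPP) hslack hi hτi hxi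
  exact (hopt τ'' εD εU hfeas'').not_gt hlt
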